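/- The dicotic transformation δ does not respect game equivalence: although the games {1 | } and {1, 0 | } are equal (both equal 2), their images δ({1 | }) = {↓ | 0} and δ({1, 0 | }) = {↓, * | 0} are not equal as games; in fact the difference {↓ | 0} − {↓, * | 0} is a Right-player win (strictly negative or Right wins moving second and first, i.e., the difference is < 0 in outcome terms: o({↓ | 0} − {↓, * | 0}) = R). -/

import Mathlib

namespace SetTheory

universe u

/-- Combinatorial pre-games, as in the older Mathlib (removed from Mathlib since). -/
inductive PGame : Type (u + 1)
  | mk : ∀ α β : Type u, (α → PGame) → (β → PGame) → PGame

namespace PGame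

def LeftMoves : PGame.{u} → Type u
  | mk l _ _ _ => l

def RightMoves : PGame.{u} → Type u
  | mk _ r _ _ => r

def moveLeft : ∀ g : PGame.{u}, LeftMoves g → PGame.{u}
  | mk _l _ L _ => L

def moveRight : ∀ g : PGame.{u}, RightMoves g → PGame.{u}
  | mk _ _r _ R => R

def ofLists (L R : List PGame.{u}) : PGame.{u} :=
  mk (ULift (Fin L.length)) (ULift (Fin R.length)) (fun i => L.get i.down) fun j => R.get j.down

inductive IsOption : PGame.{u} → PGame.{u} → Prop
  | moveLeft {x : PGame.{u}} (i : x.LeftMoves) : IsOption (x.moveLeft i) x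
  | moveRight {x : PGame.{u}} (i : x.RightMoves) : IsOption (x.moveRight i) x

theorem wf_isOption : WellFounded (@IsOption.{u}) :=
  ⟨fun x => by
    induction x with
    | mk l r L R IHl IHr =>
      refine ⟨_, fun y h => ?_⟩
      cases h with
      | moveLeft i => exact IHl i
      | moveRight j => exact IHr j⟩

instance : WellFoundedRelation PGame.{u} := ⟨IsOption, wf_isOption⟩

instance : Zero PGame.{u} := ⟨⟨PEmpty, PEmpty, PEmpty.elim, PEmpty.elim⟩⟩

instance : One PGame.{u} := ⟨⟨PUnit, PEmpty, fun _ => 0, PEmpty.elim⟩⟩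

def star : PGame.{u} := ⟨PUnit, PUnit, fun _ => 0, fun _ => 0⟩

def neg : PGame.{u} → PGame.{u}
  | mk l r L R => mk r l (fun i => neg (R i)) fun i => neg (L i)

instance : Neg PGame.{u} := ⟨neg⟩

def addAux (xl xr : Type u) (IHl : xl → PGame.{u} → PGame.{u}) (IHr : xr → PGame.{u} → PGame.{u}) :
    PGame.{u} → PGame.{u}
  | mk yl yr yL yR =>
    mk (xl ⊕ yl) (xr ⊕ yr)
      (Sum.rec (fun i => IHl i (mk yl yr yL yR)) fun i => addAux xl xr IHl IHr (yL i))
      (Sum.rec (fun i => IHr i (mk yl yr yL yR)) fun i => addAux xl xr IHl IHr (yR i))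

def add : PGame.{u} → PGame.{u} → PGame.{u}
  | mk xl xr xL xR => addAux xl xr (fun i => add (xL i)) fun i => add (xR i)

instance : Add PGame.{u} := ⟨add⟩

instance : Sub PGame.{u} := ⟨fun x y => x + -y⟩

def leLFAux (xl xr : Type u) (IHl : xl → PGame.{u} → Prop × Prop)
    (IHr : xr → PGame.{u} → Prop × Prop) : PGame.{u} → Prop × Prop
  | mk yl yr yL yR =>
    ((∀ i, (IHl i (mk yl yr yL yR)).2) ∧ ∀ j, (leLFAux xl xr IHl IHr (yR j)).2,
     (∃ i, (leLFAux xl xr IHl IHr (yL i)).1) ∨ ∃ j, (IHr j (mk yl yr yL yR)).1)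

/-- `(leLF x y).1` is `x ≤ y` and `(leLF x y).2` is `x ⧏ y`, as in the older Mathlib. -/
def leLF : PGame.{u} → PGame.{u} → Prop × Prop
  | mk xl xr xL xR => leLFAux xl xr (fun i => leLF (xL i)) fun j => leLF (xR j)

instance : LE PGame.{u} := ⟨fun x y => (leLF x y).1⟩

instance : LT PGame.{u} := ⟨fun x y => x ≤ y ∧ ¬ y ≤ x⟩

instance : HasEquiv PGame.{u} := ⟨fun x y => x ≤ y ∧ y ≤ x⟩

end PGame

end SetTheory

universe u
open SetTheory PGame
open scoped PGame

/-- The game up, ↑ = {0 | *}. -/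
def upG : PGame := ofLists [0] [star]

/-- The game down, ↓ = {* | 0}. -/
def downG : PGame := ofLists [star] [0]

/-- `copies n G` is the disjunctive sum of `n` copies of `G`. -/
def copies : ℕ → PGame → PGame
  | 0, _ => 0
  | n + 1, G => copies n G + G

/-- A game is dicotic (all-small) if either it has no options for either player, or
both players have at least one option and every option is dicotic. -/
def Dicotic (G : PGame) : Prop :=
  (IsEmpty G.LeftMoves ∧ IsEmpty G.RightMoves ∨
    Nonempty G.LeftMoves ∧ Nonempty G.RightMoves) ∧
    (∀ i, Dicotic (G.moveLeft i)) ∧ ∀ j, Dicotic (G.moveRight j)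
termination_by G
decreasing_by
  all_goals first
    | exact PGame.IsOption.moveLeft _
    | exact PGame.IsOption.moveRight _

/-- The dicotic transformation δ: every empty option set is replaced by the single option 0. -/
def delta : PGame → PGame
  | PGame.mk l r L R =>
    PGame.mk (l ⊕ PLift (IsEmpty l)) (r ⊕ PLift (IsEmpty r))
      (Sum.rec (fun i => delta (L i)) fun _ => 0)
      (Sum.rec (fun j => delta (R j)) fun _ => 0)

/-- A game is infinitesimal if every positive multiple lies strictly between -1 and 1. -/
def Infinitesimal (G : PGame) : Prop :=
  ∀ n : ℕ, 0 < n → copies n G < 1 ∧ -1 < copies n G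


/-! δ1 = δ{0 |} = {δ0 | 0} = {* | 0} = ↓, so δ{1 |} = {↓ | 0} and δ{1, 0 |} = {↓, * | 0}.
In {1, 0 |} the left option 0 is dominated by 1, which is why it does not change the value; its
image * is incomparable with ↓, so it survives: δ{1, 0 |} ≤ δ{1 |} fails at the left option *,
since neither * ≤ ↓ nor 0 ≤ {↓ | 0}.

In {↓ | 0} − {↓, * | 0} = {↓ | 0} + {0 | ↑, *} Right wins moving first by going to {↓ | 0} + *,
and moving second by answering ↓ + {0 | ↑, *} with ↓ + ↑ = 0 and {↓ | 0} + 0 with 0. -/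

namespace SetTheory.PGame

def LF (x y : PGame.{u}) : Prop := (leLF x y).2

infix:50 " ⧏ " => LF

section Unfold

variable {xl xr yl yr : Type u} {xL : xl → PGame.{u}} {xR : xr → PGame.{u}}
  {yL : yl → PGame.{u}} {yR : yr → PGame.{u}}

theorem mk_le_mk :
    mk xl xr xL xR ≤ mk yl yr yL yR ↔
      (∀ i, xL i ⧏ mk yl yr yL yR) ∧ ∀ j, mk xl xr xL xR ⧏ yR j :=
  Iff.rfl

theorem mk_lf_mk :
    mk xl xr xL xR ⧏ mk yl yr yL yR ↔
      (∃ i, mk xl xr xL xR ≤ yL i) ∨ ∃ j, xR j ≤ mk yl yr yL yR :=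
  Iff.rfl

theorem neg_mk : -mk xl xr xL xR = mk xr xl (fun j => -xR j) fun i => -xL i := rfl

theorem add_mk :
    mk xl xr xL xR + mk yl yr yL yR =
      mk (xl ⊕ yl) (xr ⊕ yr)
        (Sum.rec (fun i => xL i + mk yl yr yL yR) fun i => mk xl xr xL xR + yL i)
        (Sum.rec (fun j => xR j + mk yl yr yL yR) fun j => mk xl xr xL xR + yR j) :=
  rfl

end Unfold

theorem zero_def : (0 : PGame.{u}) = mk PEmpty PEmpty PEmpty.elim PEmpty.elim := rfl

theorem one_def : (1 : PGame.{u}) = mk PUnit PEmpty (fun _ => 0) PEmpty.elim := rfl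

theorem star_def : star.{u} = mk PUnit PUnit (fun _ => 0) fun _ => 0 := rfl

theorem sub_def (x y : PGame.{u}) : x - y = x + -y := rfl

end SetTheory.PGame

theorem delta_mk {l r : Type u} {L : l → PGame.{u}} {R : r → PGame.{u}} :
    delta (mk l r L R) =
      mk (l ⊕ PLift (IsEmpty l)) (r ⊕ PLift (IsEmpty r))
        (Sum.rec (fun i => delta (L i)) fun _ => 0) (Sum.rec (fun j => delta (R j)) fun _ => 0) := by
  rw [delta]

section Computations

attribute [local simp] ofLists downG zero_def one_def star_def sub_def neg_mk add_mk delta_mk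
  mk_le_mk mk_lf_mk Sum.forall Sum.exists isEmpty_iff

theorem ofLists_one_equiv_ofLists_one_zero : ofLists [1] [] ≈ ofLists [1, 0] [] := by
  constructor <;> simp

theorem delta_ofLists_one_equiv : delta (ofLists [1] []) ≈ ofLists [downG] [0] := by
  constructor <;> simp

theorem delta_ofLists_one_zero_equiv : delta (ofLists [1, 0] []) ≈ ofLists [downG, star] [0] := by
  constructor <;> simp

theorem not_delta_ofLists_one_zero_le : ¬delta (ofLists [1, 0] []) ≤ delta (ofLists [1] []) := by
  simp

theorem ofLists_downG_sub_le_zero : ofLists [downG] [0] - ofLists [downG, star] [0] ≤ 0 := by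
  simp

theorem not_zero_le_ofLists_downG_sub : ¬0 ≤ ofLists [downG] [0] - ofLists [downG, star] [0] := by
  simp

end Computations

theorem stmt9 :
    (ofLists [1] [] ≈ ofLists [1, 0] []) ∧
    (delta (ofLists [1] []) ≈ ofLists [downG] [0]) ∧
    (delta (ofLists [1, 0] []) ≈ ofLists [downG, star] [0]) ∧
    ¬ (delta (ofLists [1] []) ≈ delta (ofLists [1, 0] [])) ∧
    ofLists [downG] [0] - ofLists [downG, star] [0] < 0 :=
  ⟨ofLists_one_equiv_ofLists_one_zero, delta_ofLists_one_equiv, delta_ofLists_one_zero_equiv,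
    fun h => not_delta_ofLists_one_zero_le h.2,
    ofLists_downG_sub_le_zero, not_zero_le_ofLists_downG_sub⟩
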